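/- Let v(x) = |x|^{-2/3} (log log(|x| + e))^{-ν} on ℝ³ with 0 < ν ≤ 2/9. Then ∫_{ℝ³} v(x)^{9/2} (log(2 + 1/v(x)))^{-1} dx = ∞. -/

import Mathlib

/-!
In polar coordinates the integral equals `|S²| ∫₀^∞ r² Φ(v r) dr`, where
`Φ s = s^(9/2) / log (2 + 1/s)`. For `r ≥ e^e` put `L = log log (r + e) ≤ 2 log log r`;
then `v r ^ (9/2) = r⁻³ L^(-9ν/2)` and `log (2 + 1 / v r) ≤ 4 log r`. Since `9ν/2 ≤ 1`, this
gives `r² Φ(v r) ≥ (8 r log r log log r)⁻¹`, the derivative of the unbounded `log log log r / 8`.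
-/

open MeasureTheory Metric Filter ENNReal

noncomputable section

abbrev E3 := EuclideanSpace ℝ (Fin 3)

/-- Lorentz quasinorm on a set `Ω` (with `ℓ = ∞` giving the weak norm). -/
noncomputable def lorentzNorm {α F : Type*} [MeasurableSpace α] [NormedAddCommGroup F]
    (μ : Measure α) (p ℓ : ℝ≥0∞) (f : α → F) (Ω : Set α) : ℝ≥0∞ :=
  if ℓ = ⊤ then
    ⨆ σ : NNReal, (σ : ℝ≥0∞) * (μ {x | x ∈ Ω ∧ (σ : ℝ) < ‖f x‖}) ^ (1 / p).toReal
  else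
    (∫⁻ σ in Set.Ioi (0 : ℝ),
        ENNReal.ofReal (σ ^ (ℓ.toReal - 1)) *
          (μ {x | x ∈ Ω ∧ σ < ‖f x‖}) ^ (ℓ / p).toReal) ^ (1 / ℓ).toReal

/-- The annulus `B(R) \ B(R/2)` centered at the origin in `ℝ³`. -/
def ann (R : ℝ) : Set E3 := Metric.ball (0 : E3) R \ Metric.ball (0 : E3) (R / 2)

/-- Divergence of a vector field on `ℝ³`. -/
noncomputable def divg (u : E3 → E3) (x : E3) : ℝ :=
  ∑ i, fderiv ℝ u x (EuclideanSpace.single i 1) i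

/-- Componentwise Laplacian of a vector field on `ℝ³`. -/
noncomputable def lap (u : E3 → E3) (x : E3) : E3 :=
  ∑ i, fderiv ℝ (fun y => fderiv ℝ u y (EuclideanSpace.single i 1)) x (EuclideanSpace.single i 1)

/-- Convective term `(u · ∇) u`. -/
noncomputable def conv (u : E3 → E3) (x : E3) : E3 := fderiv ℝ u x (u x)

/-- Gradient of a scalar function on `ℝ³`. -/
noncomputable def gradp (p : E3 → ℝ) (x : E3) : E3 :=
  ∑ i, fderiv ℝ p x (EuclideanSpace.single i 1) • EuclideanSpace.single i 1

/-- The steady Navier–Stokes system `-Δu + (u·∇)u + ∇p = 0`, `div u = 0`. -/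
def SteadyNS (u : E3 → E3) (p : E3 → ℝ) : Prop :=
  (∀ x, -lap u x + conv u x + gradp p x = 0) ∧ (∀ x, divg u x = 0)

open Set

section PolarCoordinates

variable {E : Type*} [NormedAddCommGroup E] [NormedSpace ℝ E] [MeasurableSpace E] [BorelSpace E]
  [FiniteDimensional ℝ E] [Nontrivial E] (μ : Measure E) [μ.IsAddHaarMeasure]

theorem lintegral_fun_norm_addHaar {g : ℝ → ℝ≥0∞} (hg : Measurable g) :
    ∫⁻ x, g ‖x‖ ∂μ = μ.toSphere univ *
      ∫⁻ y in Ioi (0 : ℝ), ENNReal.ofReal (y ^ (Module.finrank ℝ E - 1)) * g y :=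
  calc ∫⁻ x, g ‖x‖ ∂μ = ∫⁻ x : ({0}ᶜ : Set E), g ‖x.1‖ ∂μ.comap (↑) := by
        rw [lintegral_subtype_comap (measurableSet_singleton 0).compl (fun x ↦ g ‖x‖),
          restrict_compl_singleton]
    _ = ∫⁻ p, g p.2 ∂μ.toSphere.prod (.volumeIoiPow (Module.finrank ℝ E - 1)) := by
        simpa using μ.measurePreserving_homeomorphUnitSphereProd.lintegral_comp
          (hg.comp (measurable_subtype_coe.comp measurable_snd))
    _ = μ.toSphere univ * ∫⁻ y, g y ∂.volumeIoiPow (Module.finrank ℝ E - 1) := by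
        rw [lintegral_prod (fun p : sphere (0 : E) 1 × Ioi (0 : ℝ) ↦ g p.2)
          (hg.comp (measurable_subtype_coe.comp measurable_snd)).aemeasurable]
        simp [mul_comm]
    _ = _ := by
        rw [Measure.volumeIoiPow, lintegral_withDensity_eq_lintegral_mul _
          (measurable_subtype_coe.pow_const _).ennreal_ofReal
            (g := fun y : Ioi (0 : ℝ) ↦ g y) (hg.comp measurable_subtype_coe),
          ← lintegral_subtype_comap measurableSet_Ioi]
        rfl

theorem lintegral_fun_norm_addHaar_eq_top {g : ℝ → ℝ≥0∞} (hg : Measurable g)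
    (h : ∫⁻ y in Ioi (0 : ℝ), ENNReal.ofReal (y ^ (Module.finrank ℝ E - 1)) * g y = ⊤) :
    ∫⁻ x, g ‖x‖ ∂μ = ⊤ := by
  rw [lintegral_fun_norm_addHaar μ hg, h,
    ENNReal.mul_top (Measure.measure_univ_ne_zero.2 (Measure.toSphere_ne_zero μ))]

end PolarCoordinates

theorem lintegral_Ioi_ofReal_deriv_eq_top {f f' : ℝ → ℝ} {a : ℝ}
    (hderiv : ∀ x ∈ Ici a, HasDerivAt f (f' x) x) (hnonneg : ∀ x ∈ Ioi a, 0 ≤ f' x)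
    (htop : Tendsto f atTop atTop) :
    ∫⁻ x in Ioi a, ENNReal.ofReal (f' x) = ⊤ := by
  refine ENNReal.eq_top_of_forall_nnreal_le fun c ↦ ?_
  obtain ⟨T, hT, haT⟩ :=
    ((htop.eventually_ge_atTop (f a + c)).and (eventually_ge_atTop a)).exists
  have hcont : ContinuousOn f (Icc a T) := fun x hx ↦
    (hderiv x hx.1).continuousAt.continuousWithinAt
  have hderiv' : ∀ x ∈ Ioo a T, HasDerivAt f (f' x) x := fun x hx ↦ hderiv x hx.1.le
  have hint : IntegrableOn f' (Ioc a T) :=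
    intervalIntegral.integrableOn_deriv_of_nonneg hcont hderiv' fun x hx ↦ hnonneg x hx.1
  calc (c : ℝ≥0∞) ≤ ENNReal.ofReal (f T - f a) := by
        rw [← ENNReal.ofReal_coe_nnreal]; exact ENNReal.ofReal_le_ofReal (by linarith)
    _ = ∫⁻ x in Ioc a T, ENNReal.ofReal (f' x) := by
        rw [← intervalIntegral.integral_eq_sub_of_hasDerivAt_of_le haT hcont hderiv'
            ((intervalIntegrable_iff_integrableOn_Ioc_of_le haT).2 hint),
          intervalIntegral.integral_of_le haT, ofReal_integral_eq_lintegral_ofReal hint]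
        filter_upwards [ae_restrict_mem measurableSet_Ioc] with x hx using hnonneg x hx.1
    _ ≤ ∫⁻ x in Ioi a, ENNReal.ofReal (f' x) := lintegral_mono_set Ioc_subset_Ioi_self

theorem hasDerivAt_log_log_log {x : ℝ} (hx : Real.exp 1 < x) :
    HasDerivAt (fun x ↦ Real.log (Real.log (Real.log x)))
      (x * Real.log x * Real.log (Real.log x))⁻¹ x := by
  have hx0 : 0 < x := (Real.exp_pos 1).trans hx
  have hlog : 1 < Real.log x := by rwa [Real.lt_log_iff_exp_lt hx0]
  have hloglog : 0 < Real.log (Real.log x) := Real.log_pos hlog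
  convert (((Real.hasDerivAt_log hx0.ne').log (by positivity)).log hloglog.ne') using 1
  field_simp

def chaeWolfDensity (s : ℝ) : ℝ := s ^ ((9 : ℝ) / 2) * (Real.log (2 + 1 / s))⁻¹

def radialProfile (ν r : ℝ) : ℝ :=
  r ^ (-(2 : ℝ) / 3) * Real.log (Real.log (r + Real.exp 1)) ^ (-ν)

theorem measurable_chaeWolfDensity_radialProfile (ν : ℝ) :
    Measurable fun r ↦ chaeWolfDensity (radialProfile ν r) := by
  unfold chaeWolfDensity radialProfile
  measurability

section LargeRadius

variable {r : ℝ}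

theorem three_le_of_exp_exp_le (hr : Real.exp (Real.exp 1) ≤ r) : 3 ≤ r := by
  have h2 : 2 ≤ Real.exp 1 := by linarith [Real.add_one_le_exp 1]
  linarith [Real.add_one_le_exp (Real.exp 1)]

theorem exp_one_le_log_of_exp_exp_le (hr : Real.exp (Real.exp 1) ≤ r) :
    Real.exp 1 ≤ Real.log r := by
  rwa [Real.le_log_iff_exp_le (by linarith [three_le_of_exp_exp_le hr])]

theorem one_le_log_log_of_exp_exp_le (hr : Real.exp (Real.exp 1) ≤ r) :
    1 ≤ Real.log (Real.log r) := by
  rw [Real.le_log_iff_exp_le (by linarith [Real.exp_pos 1, exp_one_le_log_of_exp_exp_le hr])]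
  exact exp_one_le_log_of_exp_exp_le hr

theorem one_le_log_log_add_exp_one (hr : Real.exp (Real.exp 1) ≤ r) :
    1 ≤ Real.log (Real.log (r + Real.exp 1)) := by
  have hl0 : 0 < Real.log r := (Real.exp_pos 1).trans_le (exp_one_le_log_of_exp_exp_le hr)
  refine (one_le_log_log_of_exp_exp_le hr).trans (Real.log_le_log hl0 (Real.log_le_log ?_ ?_))
  · linarith [three_le_of_exp_exp_le hr]
  · linarith [Real.exp_pos 1]

theorem log_log_add_exp_one_le (hr : Real.exp (Real.exp 1) ≤ r) :
    Real.log (Real.log (r + Real.exp 1)) ≤ 2 * Real.log (Real.log r) := by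
  have h3 := three_le_of_exp_exp_le hr
  have hl0 : 0 < Real.log r := (Real.exp_pos 1).trans_le (exp_one_le_log_of_exp_exp_le hr)
  have hsq : r + Real.exp 1 ≤ r ^ 2 := by nlinarith [Real.exp_one_lt_d9]
  calc Real.log (Real.log (r + Real.exp 1)) ≤ Real.log (2 * Real.log r) := by
        gcongr
        · exact Real.log_pos (by linarith [Real.exp_pos 1])
        · have := Real.log_le_log (by linarith [Real.exp_pos 1]) hsq
          rwa [Real.log_pow, Nat.cast_two] at this
    _ = Real.log 2 + Real.log (Real.log r) := Real.log_mul two_ne_zero hl0.ne'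
    _ ≤ 2 * Real.log (Real.log r) := by
        linarith [Real.log_two_lt_d9, one_le_log_log_of_exp_exp_le hr]

theorem rpow_log_log_add_exp_one_le (hr : Real.exp (Real.exp 1) ≤ r) {p : ℝ} (hp : p ≤ 1) :
    Real.log (Real.log (r + Real.exp 1)) ^ p ≤ 2 * Real.log (Real.log r) :=
  (Real.rpow_le_self_of_one_le (one_le_log_log_add_exp_one hr) hp).trans
    (log_log_add_exp_one_le hr)

theorem radialProfile_rpow_nine_div_two (hr : Real.exp (Real.exp 1) ≤ r) (ν : ℝ) :
    radialProfile ν r ^ ((9 : ℝ) / 2) =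
      r ^ (-3 : ℝ) * (Real.log (Real.log (r + Real.exp 1)) ^ (9 / 2 * ν))⁻¹ := by
  have hr0 : 0 ≤ r := by linarith [three_le_of_exp_exp_le hr]
  have hL0 : 0 ≤ Real.log (Real.log (r + Real.exp 1)) := by
    linarith [one_le_log_log_add_exp_one hr]
  rw [radialProfile, Real.mul_rpow (by positivity) (by positivity), ← Real.rpow_mul hr0,
    ← Real.rpow_mul hL0, ← Real.rpow_neg hL0]
  norm_num [mul_comm]

theorem log_two_add_inv_radialProfile_le (hr : Real.exp (Real.exp 1) ≤ r) {ν : ℝ}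
    (hν : ν ≤ 1) : Real.log (2 + 1 / radialProfile ν r) ≤ 4 * Real.log r := by
  have hr3 := three_le_of_exp_exp_le hr
  have hr0 : 0 < r := by linarith
  have hl0 : 0 < Real.log r := (Real.exp_pos 1).trans_le (exp_one_le_log_of_exp_exp_le hr)
  set L := Real.log (Real.log (r + Real.exp 1))
  have hL0 : 0 < L := by linarith [one_le_log_log_add_exp_one hr]
  have hinv : 1 / radialProfile ν r = r ^ ((2 : ℝ) / 3) * L ^ ν := by
    rw [radialProfile, one_div, mul_inv, ← Real.rpow_neg hr0.le, ← Real.rpow_neg hL0.le]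
    norm_num
  have h1 : r ^ ((2 : ℝ) / 3) ≤ r := Real.rpow_le_self_of_one_le (by linarith) (by norm_num)
  have h2 : L ^ ν ≤ 2 * r := (rpow_log_log_add_exp_one_le hr hν).trans <| by
    linarith [Real.log_le_self hl0.le, Real.log_le_self hr0.le]
  have h3 : 2 + 1 / radialProfile ν r ≤ r ^ 4 := by
    have hr2 : 9 ≤ r ^ 2 := by nlinarith
    rw [hinv]
    nlinarith [mul_le_mul h1 h2 (by positivity) hr0.le,
      mul_le_mul_of_nonneg_left hr2 (sq_nonneg r)]
  calc Real.log (2 + 1 / radialProfile ν r) ≤ Real.log (r ^ 4) :=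
        Real.log_le_log (by rw [hinv]; positivity) h3
    _ = 4 * Real.log r := by rw [Real.log_pow]; norm_num

theorem inv_mul_log_mul_log_log_le_chaeWolfDensity_radialProfile
    (hr : Real.exp (Real.exp 1) ≤ r) {ν : ℝ} (hν : ν ≤ 2 / 9) :
    (r * Real.log r * Real.log (Real.log r))⁻¹ ≤
      8 * (r ^ 2 * chaeWolfDensity (radialProfile ν r)) := by
  have hr0 : 0 < r := by linarith [three_le_of_exp_exp_le hr]
  set l := Real.log r
  set ll := Real.log (Real.log r)
  set L := Real.log (Real.log (r + Real.exp 1))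
  set w := radialProfile ν r
  have hl0 : 0 < l := (Real.exp_pos 1).trans_le (exp_one_le_log_of_exp_exp_le hr)
  have hL0 : 0 < L := by linarith [one_le_log_log_add_exp_one hr]
  have hw0 : 0 < w := by unfold w radialProfile; positivity
  have hrpow : r ^ 2 * r ^ (-3 : ℝ) = r⁻¹ := by
    rw [← Real.rpow_natCast, ← Real.rpow_add hr0]; norm_num [Real.rpow_neg_one]
  have hL : L ^ (9 / 2 * ν) ≤ 2 * ll := rpow_log_log_add_exp_one_le hr (by linarith)
  have hlog : Real.log (2 + 1 / w) ≤ 4 * l := log_two_add_inv_radialProfile_le hr (by linarith)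
  have hlog0 : 0 < Real.log (2 + 1 / w) := Real.log_pos (by linarith [one_div_pos.2 hw0])
  calc (r * l * ll)⁻¹ = 8 * (r ^ 2 * r ^ (-3 : ℝ)) * ((2 * ll)⁻¹ * (4 * l)⁻¹) := by
        rw [hrpow]; field_simp; ring
    _ ≤ 8 * (r ^ 2 * r ^ (-3 : ℝ)) *
          ((L ^ (9 / 2 * ν))⁻¹ * (Real.log (2 + 1 / w))⁻¹) := by
        gcongr
    _ = 8 * (r ^ 2 * chaeWolfDensity w) := by
        rw [chaeWolfDensity, radialProfile_rpow_nine_div_two hr]; ring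

end LargeRadius

theorem lintegral_sq_mul_chaeWolfDensity_radialProfile_eq_top {ν : ℝ} (hν : ν ≤ 2 / 9) :
    ∫⁻ r in Ioi (0 : ℝ),
      ENNReal.ofReal (r ^ 2) * ENNReal.ofReal (chaeWolfDensity (radialProfile ν r)) = ⊤ := by
  set a := Real.exp (Real.exp 1)
  have hea : Real.exp 1 < a := by linarith [Real.add_one_le_exp (Real.exp 1)]
  have hdiv : ∫⁻ r in Ioi a,
      ENNReal.ofReal (r * Real.log r * Real.log (Real.log r))⁻¹ = ⊤ := by
    refine lintegral_Ioi_ofReal_deriv_eq_top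
      (fun x hx ↦ hasDerivAt_log_log_log (hea.trans_le hx)) (fun x hx ↦ ?_)
      (Real.tendsto_log_atTop.comp (Real.tendsto_log_atTop.comp Real.tendsto_log_atTop))
    have hx3 := three_le_of_exp_exp_le hx.le
    have hl := exp_one_le_log_of_exp_exp_le hx.le
    have hll := one_le_log_log_of_exp_exp_le hx.le
    have := Real.exp_pos 1
    exact inv_nonneg.2 (mul_nonneg (mul_nonneg (by linarith) (by linarith)) (by linarith))
  have hbound : ⊤ ≤ 8 * ∫⁻ r in Ioi a,
      ENNReal.ofReal (r ^ 2) * ENNReal.ofReal (chaeWolfDensity (radialProfile ν r)) := by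
    rw [← hdiv, ← lintegral_const_mul' _ _ ENNReal.ofNat_ne_top]
    refine setLIntegral_mono' measurableSet_Ioi fun r hr ↦ ?_
    rw [← ENNReal.ofReal_mul (sq_nonneg r), ← ENNReal.ofReal_ofNat 8,
      ← ENNReal.ofReal_mul (by norm_num)]
    exact ENNReal.ofReal_le_ofReal
      (inv_mul_log_mul_log_log_le_chaeWolfDensity_radialProfile (le_of_lt hr) hν)
  have htop : ∫⁻ r in Ioi a,
      ENNReal.ofReal (r ^ 2) * ENNReal.ofReal (chaeWolfDensity (radialProfile ν r)) = ⊤ := by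
    simpa [top_le_iff, ENNReal.mul_eq_top] using hbound
  exact top_unique (htop ▸ lintegral_mono_set (Ioi_subset_Ioi (Real.exp_pos _).le))

theorem stmt_14_general (ν : ℝ) (hν : ν ≤ 2 / 9)
    (v : E3 → ℝ)
    (hv : v = fun x : E3 =>
      ‖x‖ ^ (-(2 : ℝ) / 3) * (Real.log (Real.log (‖x‖ + Real.exp 1))) ^ (-ν)) :
    ∫⁻ x : E3, ENNReal.ofReal (v x ^ ((9 : ℝ) / 2) * (Real.log (2 + 1 / v x))⁻¹) = ⊤ := by
  subst hv
  refine lintegral_fun_norm_addHaar_eq_top volume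
    (g := fun r ↦ ENNReal.ofReal (chaeWolfDensity (radialProfile ν r)))
    (measurable_chaeWolfDensity_radialProfile ν).ennreal_ofReal ?_
  rw [finrank_euclideanSpace_fin]
  simpa [ENNReal.ofReal_pow] using lintegral_sq_mul_chaeWolfDensity_radialProfile_eq_top hν

theorem stmt_14 (ν : ℝ) (hν0 : 0 < ν) (hν : ν ≤ 2 / 9)
    (v : E3 → ℝ)
    (hv : v = fun x : E3 =>
      ‖x‖ ^ (-(2 : ℝ) / 3) * (Real.log (Real.log (‖x‖ + Real.exp 1))) ^ (-ν)) :
    ∫⁻ x : E3, ENNReal.ofReal (v x ^ ((9 : ℝ) / 2) * (Real.log (2 + 1 / v x))⁻¹) = ⊤ :=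
  stmt_14_general ν hν v hv
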